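/- arXiv:1202.3817 — 2 statements merged into one kernel-verified Lean document; each statement's English description precedes it below -/
import Mathlib

section
/- Every finite-dimensional unitary representation ρ of the group ⟨u, v | v⁻¹u²v = u³⟩ satisfies ρ(u)ρ(v)⁻¹ρ(u)ρ(v) = ρ(v)⁻¹ρ(u)ρ(v)ρ(u). -/
/-!
Write `a = ρ u` and `b = ρ v`. Conjugation by the unitary `b` preserves spectra, so by spectral
mapping the finite spectrum `S` of `a` satisfies `S³ = S²`, hence `S^(3^n) = S^(2^n)` for all `n`.
For `z ∈ S` pick `w n ∈ S` with `w n ^ 2^n = z ^ 3^n`; by pigeonhole `w p = w (p + k)` for some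
`k > 0`, which gives `z ^ (3^p 2^k) = z ^ (3^p 3^k)`, so `z` is a root of unity of odd order.
Since `a` is normal, the functional calculus turns this into `a ^ N = 1` for an odd `N`.
Then `c = b⁻¹ a b` satisfies `c ^ N = 1` and `c² = a³`, so `c = (c²)^((N+1)/2)` is a power of `a`
and commutes with `a`, which is the claim.
-/

/-- The single relator `v⁻¹ u² v u⁻³` of the Baumslag–Solitar group `BS(2,3)`,
with `u = of 0` and `v = of 1`. -/
def bsRels : Set (FreeGroup (Fin 2)) :=
  {(FreeGroup.of 1)⁻¹ * (FreeGroup.of 0) ^ 2 * FreeGroup.of 1 * ((FreeGroup.of 0) ^ 3)⁻¹}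

theorem Commute.of_sq_right_of_pow_eq_one {M : Type*} [Monoid M] {a c : M} {N : ℕ} (hN : Odd N)
    (hc : c ^ N = 1) (h : Commute a (c ^ 2)) : Commute a c := by
  obtain ⟨k, rfl⟩ := hN
  have : c = (c ^ 2) ^ (k + 1) := by
    rw [← pow_mul, show 2 * (k + 1) = 2 * k + 1 + 1 by ring, pow_succ, hc, one_mul]
  exact this ▸ h.pow_right (k + 1)

theorem Commute.of_conj_sq_eq_cube {G : Type*} [Group G] {a b : G} {N : ℕ} (hN : Odd N)
    (ha : a ^ N = 1) (h : b⁻¹ * a ^ 2 * b = a ^ 3) : Commute a (b⁻¹ * a * b) := by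
  have hconj (n : ℕ) : (b⁻¹ * a * b) ^ n = b⁻¹ * a ^ n * b := by
    simpa using conj_pow (a := b⁻¹) (b := a) (i := n)
  refine .of_sq_right_of_pow_eq_one hN (by rw [hconj, ha, mul_one, inv_mul_cancel]) ?_
  rw [hconj, h]
  exact (Commute.refl a).pow_right 3

theorem Set.image_pow_pow_eq_of_image_pow_eq {M : Type*} [Monoid M] {S : Set M} {k m : ℕ}
    (h : (· ^ k) '' S = (· ^ m) '' S) (n : ℕ) :
    (· ^ k ^ n) '' S = (· ^ m ^ n) '' S := by
  induction n with
  | zero => rfl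
  | succ n ih =>
    calc (· ^ k ^ (n + 1)) '' S = (· ^ k) '' ((· ^ k ^ n) '' S) := by
          simp only [Set.image_image, ← pow_mul, pow_succ]
      _ = (· ^ m ^ n) '' ((· ^ k) '' S) := by
          simp only [ih, Set.image_image, ← pow_mul, mul_comm]
      _ = (· ^ m ^ (n + 1)) '' S := by
          simp only [h, Set.image_image, ← pow_mul, pow_succ']

theorem exists_odd_pow_eq_one_of_pow_eq_pow {G₀ : Type*} [GroupWithZero G₀] {z : G₀} (hz : z ≠ 0)
    {c k : ℕ} (hc : Odd c) (hk : k ≠ 0) (h : z ^ (c * 2 ^ k) = z ^ (c * 3 ^ k)) :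
    ∃ e, Odd e ∧ z ^ e = 1 := by
  have hlt : c * 2 ^ k < c * 3 ^ k :=
    Nat.mul_lt_mul_of_pos_left (Nat.pow_lt_pow_left (by norm_num) hk) hc.pos
  refine ⟨c * 3 ^ k - c * 2 ^ k, ?_, ?_⟩
  · exact Nat.Odd.sub_even hlt.le (hc.mul (by decide : Odd 3).pow)
      ((Nat.even_pow.mpr ⟨even_two, hk⟩).mul_left c)
  · rw [pow_sub₀ z hz hlt.le, ← h, mul_inv_cancel₀ (pow_ne_zero _ hz)]

theorem exists_odd_pow_eq_one_of_forall_pow_three_pow_mem {G₀ : Type*} [GroupWithZero G₀]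
    {S : Set G₀} (hS : S.Finite) {z : G₀} (hz : z ≠ 0)
    (h : ∀ n : ℕ, z ^ 3 ^ n ∈ (· ^ 2 ^ n) '' S) : ∃ e, Odd e ∧ z ^ e = 1 := by
  choose w hwS hw using h
  simp only at hw
  obtain ⟨p, q, hpq, hwpq⟩ := Set.Finite.exists_lt_map_eq_of_forall_mem hwS hS
  obtain ⟨k, rfl⟩ := Nat.exists_eq_add_of_lt hpq
  refine exists_odd_pow_eq_one_of_pow_eq_pow hz ((by decide : Odd 3).pow (n := p))
    k.succ_ne_zero ?_
  calc z ^ (3 ^ p * 2 ^ (k + 1)) = (w p ^ 2 ^ p) ^ 2 ^ (k + 1) := by rw [hw, pow_mul]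
    _ = w (p + k + 1) ^ 2 ^ (p + k + 1) := by rw [← hwpq, ← pow_mul, ← pow_add, add_assoc]
    _ = z ^ (3 ^ p * 3 ^ (k + 1)) := by rw [hw, ← pow_add, add_assoc]

theorem Set.Finite.exists_odd_forall_pow_eq_one {M : Type*} [Monoid M] {S : Set M} (hS : S.Finite)
    (h : ∀ z ∈ S, ∃ e, Odd e ∧ z ^ e = 1) : ∃ N, Odd N ∧ ∀ z ∈ S, z ^ N = 1 := by
  choose! e he using h
  refine ⟨∏ z ∈ hS.toFinset, e z, ?_, fun z hz => ?_⟩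
  · exact Finset.prod_induction e Odd (fun _ _ => Odd.mul) odd_one fun z hz =>
      (he z (hS.mem_toFinset.mp hz)).1
  · obtain ⟨c, hc⟩ := Finset.dvd_prod_of_mem e (hS.mem_toFinset.mpr hz)
    rw [hc, pow_mul, (he z hz).2, one_pow]

theorem Set.Finite.exists_odd_forall_pow_eq_one_of_image_pow_three_eq {G₀ : Type*}
    [GroupWithZero G₀] {S : Set G₀} (hS : S.Finite) (h0 : 0 ∉ S)
    (h : (· ^ 3) '' S = (· ^ 2) '' S) : ∃ N, Odd N ∧ ∀ z ∈ S, z ^ N = 1 :=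
  hS.exists_odd_forall_pow_eq_one fun z hz =>
    exists_odd_pow_eq_one_of_forall_pow_three_pow_mem hS (ne_of_mem_of_not_mem hz h0) fun n =>
      Set.image_pow_pow_eq_of_image_pow_eq h n ▸ ⟨z, hz, rfl⟩

theorem Unitary.exists_odd_pow_eq_one_of_conj_sq_eq_cube {A : Type*} [CStarAlgebra A]
    {u v : unitary A} (hu : (spectrum ℂ (u : A)).Finite) (h : v⁻¹ * u ^ 2 * v = u ^ 3) :
    ∃ N, Odd N ∧ u ^ N = 1 := by
  have hspec : (· ^ 3) '' spectrum ℂ (u : A) = (· ^ 2) '' spectrum ℂ (u : A) := by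
    rw [← spectrum.map_pow_of_pos _ three_pos, ← spectrum.map_pow_of_pos _ two_pos,
      ← SubmonoidClass.coe_pow, ← h]
    simp [← Unitary.star_eq_inv]
  obtain ⟨N, hN, hN1⟩ := hu.exists_odd_forall_pow_eq_one_of_image_pow_three_eq
    (spectrum.zero_notMem ℂ (Unitary.toUnits u).isUnit) hspec
  have hsub : spectrum ℂ ((u ^ N : unitary A) : A) ⊆ {1} := by
    rw [SubmonoidClass.coe_pow, spectrum.map_pow_of_pos _ hN.pos]
    rintro _ ⟨z, hz, rfl⟩
    exact hN1 z hz
  exact ⟨N, hN, Subtype.ext (CFC.eq_one_of_spectrum_subset_one _ hsub)⟩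

theorem ContinuousLinearMap.finite_spectrum {𝕜 E : Type*} [NontriviallyNormedField 𝕜]
    [CompleteSpace 𝕜] [NormedAddCommGroup E] [NormedSpace 𝕜 E] [FiniteDimensional 𝕜 E]
    (f : E →L[𝕜] E) : (spectrum 𝕜 f).Finite := by
  have := FiniteDimensional.complete 𝕜 E
  rw [ContinuousLinearMap.spectrum_eq]
  exact Module.End.finite_spectrum _

theorem bsRels_conj_sq_eq_cube :
    ((PresentedGroup.of 1)⁻¹ * PresentedGroup.of 0 ^ 2 * PresentedGroup.of 1 :
      PresentedGroup bsRels) = PresentedGroup.of 0 ^ 3 :=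
  mul_inv_eq_one.mp (PresentedGroup.one_of_mem (Set.mem_singleton _))

theorem stmt11 {H : Type*} [NormedAddCommGroup H] [InnerProductSpace ℂ H]
    [FiniteDimensional ℂ H]
    (ρ : PresentedGroup bsRels →* unitary (H →L[ℂ] H)) :
    ρ (PresentedGroup.of 0) * (ρ (PresentedGroup.of 1))⁻¹ * ρ (PresentedGroup.of 0) *
        ρ (PresentedGroup.of 1) =
      (ρ (PresentedGroup.of 1))⁻¹ * ρ (PresentedGroup.of 0) * ρ (PresentedGroup.of 1) *
        ρ (PresentedGroup.of 0) := by
  have hrel := congrArg ρ bsRels_conj_sq_eq_cube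
  simp only [map_mul, map_inv, map_pow] at hrel
  have hfin : (spectrum ℂ (ρ (PresentedGroup.of 0) : H →L[ℂ] H)).Finite :=
    ContinuousLinearMap.finite_spectrum _
  obtain ⟨N, hN, hN1⟩ := Unitary.exists_odd_pow_eq_one_of_conj_sq_eq_cube hfin hrel
  simpa only [mul_assoc] using (Commute.of_conj_sq_eq_cube hN hN1 hrel).eq
end

section
/- Let U be a unitary on a Hilbert space of dimension at most d, write its eigenvalues as e^{2πiλ} with λ ∈ ℝ/ℤ, and suppose that for every eigenvalue λ₀ there is an eigenvalue λ₁ with |3λ₀ − 2λ₁| < ε (circle metric), where ε < 1/(6·3^d·d·N_d). Then every eigenvalue λ of U satisfies |N_d·λ| < 3^d·d·N_d·ε, i.e., λ is within 3^d·d·ε of a rational with denominator N_d. -/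
/-- `N_d = 3^d * lcm {3^1 - 2^1, …, 3^d - 2^d}`. -/
def Npaper (d : ℕ) : ℕ := 3 ^ d * (Finset.Icc 1 d).lcm (fun j => 3 ^ j - 2 ^ j)

/-!
Follow the eigenvalues λ₀ = λ, λ₁, λ₂, … chosen by the hypothesis, so that ‖3λₖ - 2λₖ₊₁‖ < ε.
Among λ₀, …, λ_d two coincide, say λᵢ = λᵢ₊ₘ with 0 < m ≤ d. Telescoping the chain gives
‖3^m λᵢ - 2^m λᵢ₊ₘ‖ ≤ (3^m - 2^m) ε, i.e. ‖(3^m - 2^m) λᵢ‖ ≤ (3^m - 2^m) ε, and hence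
‖L λᵢ‖ ≤ L ε for L = lcm (3^j - 2^j). Running the chain backwards, each step
3λₖ = (3λₖ - 2λₖ₊₁) + 2λₖ₊₁ turns a bound ‖n λₖ₊₁‖ ≤ n ε into ‖3n λₖ‖ ≤ 3n ε, so
‖3^i L λ₀‖ ≤ 3^i L ε, and ‖N_d λ‖ ≤ N_d ε follows since 3^i L ∣ N_d.
-/

lemma exists_seq_of_forall_exists {α : Type*} {P : α → Prop} {R : α → α → Prop}
    (h : ∀ a, P a → ∃ b, P b ∧ R a b) {a₀ : α} (ha₀ : P a₀) :
    ∃ f : ℕ → α, f 0 = a₀ ∧ (∀ k, P (f k)) ∧ ∀ k, R (f k) (f (k + 1)) := by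
  choose! g hgP hgR using h
  have hP : ∀ k, P (g^[k] a₀) := fun k => by
    induction k with
    | zero => exact ha₀
    | succ k ih => rw [Function.iterate_succ_apply']; exact hgP _ ih
  refine ⟨fun k => g^[k] a₀, rfl, hP, fun k => ?_⟩
  simp only [Function.iterate_succ_apply']
  exact hgR _ (hP k)

section Chain

variable {G : Type*} [SeminormedAddCommGroup G] {x : ℕ → G} {ε : ℝ}

lemma norm_nsmul_le_of_dvd {y : G} {a b : ℕ} (hab : a ∣ b) (h : ‖a • y‖ ≤ a * ε) :
    ‖b • y‖ ≤ b * ε := by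
  obtain ⟨q, rfl⟩ := hab
  calc ‖(a * q) • y‖ = ‖q • a • y‖ := by rw [mul_nsmul]
    _ ≤ q * (a * ε) := norm_nsmul_le.trans (by gcongr)
    _ = ↑(a * q) * ε := by push_cast; ring

variable (hx : ∀ k, ‖3 • x k - 2 • x (k + 1)‖ ≤ ε)
include hx

lemma norm_pow_three_nsmul_sub_pow_two_nsmul_le (i t : ℕ) :
    ‖3 ^ t • x i - 2 ^ t • x (i + t)‖ ≤ (3 ^ t - 2 ^ t) * ε := by
  induction t with
  | zero => simp
  | succ t ih =>
    have hsplit : 3 ^ (t + 1) • x i - 2 ^ (t + 1) • x (i + (t + 1)) =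
        3 • (3 ^ t • x i - 2 ^ t • x (i + t)) + 2 ^ t • (3 • x (i + t) - 2 • x (i + t + 1)) := by
      rw [← add_assoc]
      module
    calc ‖3 ^ (t + 1) • x i - 2 ^ (t + 1) • x (i + (t + 1))‖
        ≤ 3 * ((3 ^ t - 2 ^ t) * ε) + 2 ^ t * ε := by
          rw [hsplit]
          refine (norm_add_le _ _).trans (add_le_add ?_ ?_)
          · exact norm_nsmul_le.trans (by push_cast; gcongr)
          · exact norm_nsmul_le.trans (by push_cast; gcongr; exact hx _)
      _ = (3 ^ (t + 1) - 2 ^ (t + 1)) * ε := by ring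

lemma norm_nsmul_le_of_periodic {i m : ℕ} (hper : x (i + m) = x i) :
    ‖(3 ^ m - 2 ^ m) • x i‖ ≤ ((3 ^ m - 2 ^ m : ℕ) : ℝ) * ε := by
  have h23 : 2 ^ m ≤ 3 ^ m := Nat.pow_le_pow_left (by norm_num) m
  have h := norm_pow_three_nsmul_sub_pow_two_nsmul_le hx i m
  rw [hper] at h
  rw [sub_nsmul _ h23, ← sub_eq_add_neg, Nat.cast_sub h23]
  exact_mod_cast h

lemma norm_three_mul_nsmul_le {n k : ℕ} (h : ‖n • x (k + 1)‖ ≤ n * ε) :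
    ‖(3 * n) • x k‖ ≤ ↑(3 * n) * ε := by
  have hsplit : (3 * n) • x k = n • (3 • x k - 2 • x (k + 1)) + 2 • n • x (k + 1) := by
    module
  calc ‖(3 * n) • x k‖ ≤ n * ε + 2 * (n * ε) := by
        rw [hsplit]
        refine (norm_add_le _ _).trans (add_le_add ?_ ?_)
        · exact norm_nsmul_le.trans (by gcongr; exact hx _)
        · exact norm_nsmul_le.trans (by push_cast; gcongr)
    _ = ↑(3 * n) * ε := by push_cast; ring

lemma norm_pow_three_mul_nsmul_le {n : ℕ} (t : ℕ) {k : ℕ} (h : ‖n • x (k + t)‖ ≤ n * ε) :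
    ‖(3 ^ t * n) • x k‖ ≤ ↑(3 ^ t * n) * ε := by
  induction t generalizing k with
  | zero => simpa using h
  | succ t ih =>
    rw [pow_succ', mul_assoc]
    exact norm_three_mul_nsmul_le hx (ih (by rwa [add_right_comm]))

lemma norm_Npaper_nsmul_le {i m d : ℕ} (hm : 0 < m) (hmd : i + m ≤ d) (hper : x (i + m) = x i) :
    ‖Npaper d • x 0‖ ≤ Npaper d * ε := by
  set L := (Finset.Icc 1 d).lcm (fun j => 3 ^ j - 2 ^ j)
  have hL : ‖L • x (0 + i)‖ ≤ L * ε := by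
    rw [zero_add]
    exact norm_nsmul_le_of_dvd (Finset.dvd_lcm (Finset.mem_Icc.2 ⟨hm, by omega⟩))
      (norm_nsmul_le_of_periodic hx hper)
  refine norm_nsmul_le_of_dvd ⟨3 ^ (d - i), ?_⟩ (norm_pow_three_mul_nsmul_le hx i hL)
  rw [Npaper, mul_right_comm, ← pow_add, Nat.add_sub_cancel' (by omega)]

end Chain

lemma Npaper_pos (d : ℕ) : 0 < Npaper d := by
  refine Nat.mul_pos (by positivity) (Nat.pos_of_ne_zero ?_)
  rw [Ne, Finset.lcm_eq_zero_iff]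
  rintro ⟨j, hj, hj0⟩
  have hj1 := (Finset.mem_Icc.1 hj).1
  have : 2 ^ j < 3 ^ j := Nat.pow_lt_pow_left (by norm_num) (by omega)
  have : 3 ^ j - 2 ^ j = 0 := hj0
  omega

lemma AddCircle.coe_eq_coe_of_exp_eq {a b : ℝ}
    (h : Complex.exp (2 * Real.pi * Complex.I * a) = Complex.exp (2 * Real.pi * Complex.I * b)) :
    (a : AddCircle (1 : ℝ)) = b := by
  apply AddCircle.injective_toCircle one_ne_zero
  ext1
  simp only [AddCircle.toCircle_apply_mk, Circle.coe_exp]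
  push_cast
  convert h using 2 <;> ring

lemma AddCircle.coe_natCast_mul {p : ℝ} (n : ℕ) (a : ℝ) :
    ((n * a : ℝ) : AddCircle p) = n • (a : AddCircle p) := by
  rw [← AddCircle.coe_nsmul, nsmul_eq_mul]

section Eigenvalues

variable {K V : Type*} [Field K] [AddCommGroup V] [Module K V] [FiniteDimensional K V]

lemma Module.End.card_le_finrank_of_injective {T : Module.End K V} {ι : Type*} [Fintype ι]
    {f : ι → K} (hf : Function.Injective f) (hT : ∀ i, T.HasEigenvalue (f i)) :
    Fintype.card ι ≤ Module.finrank K V := by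
  choose v hv using fun i => (hT i).exists_hasEigenvector
  exact (T.eigenvectors_linearIndependent' f hf v hv).fintype_card_le_finrank

lemma Module.End.exists_lt_eq_of_hasEigenvalue {T : Module.End K V} {d : ℕ}
    (hdim : Module.finrank K V ≤ d) {f : ℕ → K} (hT : ∀ k, T.HasEigenvalue (f k)) :
    ∃ i j, i < j ∧ j ≤ d ∧ f i = f j := by
  have hninj : ¬ Function.Injective (fun k : Fin (d + 1) => f k) := fun hinj => by
    have := card_le_finrank_of_injective hinj (fun k => hT k)
    rw [Fintype.card_fin] at this
    omega
  obtain ⟨a, b, hab, hne⟩ := Function.not_injective_iff.1 hninj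
  rcases Fin.lt_or_lt_of_ne hne with hlt | hlt
  · exact ⟨a, b, hlt, by omega, hab⟩
  · exact ⟨b, a, hlt, by omega, hab.symm⟩

end Eigenvalues

theorem stmt13_general {H : Type*} [NormedAddCommGroup H] [InnerProductSpace ℂ H]
    [FiniteDimensional ℂ H]
    (d : ℕ) (hdim : Module.finrank ℂ H ≤ d)
    (U : H →L[ℂ] H)
    (ε : ℝ)
    (h : ∀ l0 : ℝ,
      Module.End.HasEigenvalue (U : H →ₗ[ℂ] H)
        (Complex.exp (2 * Real.pi * Complex.I * l0)) →
      ∃ l1 : ℝ,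
        Module.End.HasEigenvalue (U : H →ₗ[ℂ] H)
          (Complex.exp (2 * Real.pi * Complex.I * l1)) ∧
        ‖((3 * l0 - 2 * l1 : ℝ) : AddCircle (1 : ℝ))‖ < ε) :
    ∀ l : ℝ,
      Module.End.HasEigenvalue (U : H →ₗ[ℂ] H)
        (Complex.exp (2 * Real.pi * Complex.I * l)) →
      ‖(((Npaper d : ℝ) * l : ℝ) : AddCircle (1 : ℝ))‖ < 3 ^ d * d * Npaper d * ε := by
  intro l hl
  obtain ⟨μ, rfl, hμ, hchain⟩ := exists_seq_of_forall_exists h hl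
  obtain ⟨i, j, hij, hjd, hexp⟩ := Module.End.exists_lt_eq_of_hasEigenvalue hdim hμ
  have hε : 0 < ε := (norm_nonneg _).trans_lt (hchain 0)
  set x : ℕ → AddCircle (1 : ℝ) := fun k => μ k
  have hx : ∀ k, ‖3 • x k - 2 • x (k + 1)‖ ≤ ε := fun k => by
    simpa [x, ← AddCircle.coe_nsmul] using (hchain k).le
  have hper : x (i + (j - i)) = x i := by
    rw [Nat.add_sub_cancel' hij.le]
    exact (AddCircle.coe_eq_coe_of_exp_eq hexp).symm
  have hd : (1 : ℝ) < 3 ^ d * d := by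
    have hd1 : (1 : ℝ) ≤ d := by exact_mod_cast (show 1 ≤ d by omega)
    exact one_lt_mul_of_lt_of_le (one_lt_pow₀ (by norm_num) (by omega)) hd1
  rw [AddCircle.coe_natCast_mul, mul_assoc (_ * _)]
  refine (norm_Npaper_nsmul_le hx (Nat.sub_pos_of_lt hij) (by omega) hper).trans_lt ?_
  exact lt_mul_of_one_lt_left (mul_pos (Nat.cast_pos.2 (Npaper_pos d)) hε) hd

theorem stmt13 {H : Type*} [NormedAddCommGroup H] [InnerProductSpace ℂ H]
    [FiniteDimensional ℂ H]
    (d : ℕ) (hdim : Module.finrank ℂ H ≤ d)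
    (U : H →L[ℂ] H) (hU : U ∈ unitary (H →L[ℂ] H))
    (ε : ℝ) (hε : ε < 1 / (6 * 3 ^ d * d * Npaper d))
    (h : ∀ l0 : ℝ,
      Module.End.HasEigenvalue (U : H →ₗ[ℂ] H)
        (Complex.exp (2 * Real.pi * Complex.I * l0)) →
      ∃ l1 : ℝ,
        Module.End.HasEigenvalue (U : H →ₗ[ℂ] H)
          (Complex.exp (2 * Real.pi * Complex.I * l1)) ∧
        ‖((3 * l0 - 2 * l1 : ℝ) : AddCircle (1 : ℝ))‖ < ε) :
    ∀ l : ℝ,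
      Module.End.HasEigenvalue (U : H →ₗ[ℂ] H)
        (Complex.exp (2 * Real.pi * Complex.I * l)) →
      ‖(((Npaper d : ℝ) * l : ℝ) : AddCircle (1 : ℝ))‖ < 3 ^ d * d * Npaper d * ε :=
  stmt13_general d hdim U ε h
end
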